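/- ReLU attention is contextually expressive (transitive on groups of sequences): let d ≥ 2, and let x_1, …, x_p be p source sequences and y_1, …, y_p be p target sequences, each a sequence of n tokens in ℝ^d. Assume that within each source sequence the n tokens are pairwise distinct, and that for i ≠ j the sets of tokens {x_{i,1}, …, x_{i,n}} and {x_{j,1}, …, x_{j,n}} are distinct. Then there exist L ≤ 2p(n+1) − 1 ReLU attention layers T_1, …, T_L, each with at most 3 heads, such that the composition T_L ∘ … ∘ T_1, applied tokenwise to each sequence with its own tokens as context, maps each source sequence x_i exactly onto its prescribed target sequence y_i: for all i and k, (T_L ∘ … ∘ T_1)(x_i)_k = y_{i,k}. -/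

import Mathlib

/-- `ReLU t = max t 0` on the reals. -/
noncomputable def ReLU (t : ℝ) : ℝ := max t 0

/-- One head of a ReLU attention layer on `ℝ^d`: affine query and key maps into `ℝ`,
and an affine value map on `ℝ^d`. -/
structure ReLUHead (d : ℕ) where
  query : EuclideanSpace ℝ (Fin d) →ᵃ[ℝ] ℝ
  key : EuclideanSpace ℝ (Fin d) →ᵃ[ℝ] ℝ
  val : EuclideanSpace ℝ (Fin d) →ᵃ[ℝ] EuclideanSpace ℝ (Fin d)

/-- A ReLU attention layer (a list of heads) sends a token sequence `X` to the sequence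
whose `k`-th token is `X k + ∑_h ∑_m ReLU (q_h (X k) - k_h (X m)) • V_h (X m)`. -/
noncomputable def applyReluHeads (d n : ℕ) (heads : List (ReLUHead d))
    (X : Fin n → EuclideanSpace ℝ (Fin d)) : Fin n → EuclideanSpace ℝ (Fin d) :=
  fun k => X k + (heads.map (fun h => ∑ m, ReLU (h.query (X k) - h.key (X m)) • h.val (X m))).sum

/-- Successive (tokenwise) application of a list of ReLU attention layers, each sequence
serving as its own context. -/
noncomputable def applyReluLayers (d n : ℕ) (layers : List (List (ReLUHead d)))
    (X : Fin n → EuclideanSpace ℝ (Fin d)) : Fin n → EuclideanSpace ℝ (Fin d) :=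
  layers.foldl (fun X T => applyReluHeads d n T X) X

open scoped RealInnerProductSpace
open Finset
open scoped symmDiff

lemma ReLU_of_nonpos {t : ℝ} (h : t ≤ 0) : ReLU t = 0 := max_eq_right h
lemma ReLU_of_nonneg {t : ℝ} (h : 0 ≤ t) : ReLU t = t := max_eq_left h

lemma applyReluLayers_append (d n : ℕ) (L1 L2 : List (List (ReLUHead d)))
    (X : Fin n → EuclideanSpace ℝ (Fin d)) :
    applyReluLayers d n (L1 ++ L2) X = applyReluLayers d n L2 (applyReluLayers d n L1 X) := by
  simp [applyReluLayers, List.foldl_append]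

/-- affine map `x ↦ ⟪w, x⟫`. -/
noncomputable def innerA {d : ℕ} (w : EuclideanSpace ℝ (Fin d)) :
    EuclideanSpace ℝ (Fin d) →ᵃ[ℝ] ℝ :=
  LinearMap.toAffineMap ((innerSL ℝ w).toLinearMap)

@[simp] lemma innerA_apply {d : ℕ} (w z : EuclideanSpace ℝ (Fin d)) : innerA w z = ⟪w, z⟫ := rfl

/-- a separating functional for a finite family of nonzero vectors. -/
lemma exists_separating {E : Type*} [NormedAddCommGroup E] [InnerProductSpace ℝ E]
    (F : Finset E) (hF : ∀ u ∈ F, u ≠ 0) : ∃ w : E, ∀ u ∈ F, ⟪w, u⟫ ≠ 0 := by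
  classical
  induction F using Finset.induction_on with
  | empty => exact ⟨0, by simp⟩
  | @insert u s hus ih =>
    obtain ⟨w, hw⟩ := ih (fun v hv => hF v (Finset.mem_insert_of_mem hv))
    have hu0 : u ≠ 0 := hF u (Finset.mem_insert_self u s)
    by_cases h0 : ⟪w, u⟫ ≠ 0
    · refine ⟨w, ?_⟩
      intro v hv
      rcases Finset.mem_insert.1 hv with rfl | hv
      · exact h0
      · exact hw v hv
    · push_neg at h0
      obtain ⟨t, ht⟩ := Infinite.exists_notMem_finset
        (insert (0:ℝ) (s.image fun v => -⟪w, v⟫ / ⟪u, v⟫))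
      have ht0 : t ≠ 0 := fun h => ht (by simp [h])
      refine ⟨w + t • u, ?_⟩
      intro v hv
      rcases Finset.mem_insert.1 hv with rfl | hv
      · rw [inner_add_left, real_inner_smul_left, h0, zero_add]
        exact mul_ne_zero ht0 (inner_self_ne_zero.2 hu0)
      · rw [inner_add_left, real_inner_smul_left]
        by_cases huv : ⟪u, v⟫ = 0
        · simpa [huv] using hw v hv
        · intro hc
          apply ht
          apply Finset.mem_insert_of_mem
          refine Finset.mem_image.2 ⟨v, hv, ?_⟩
          field_simp
          linarith [hc]

lemma count_effect (d n : ℕ) (w v : EuclideanSpace ℝ (Fin d)) (a g : ℝ) (hg : 0 < g)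
    (X : Fin n → EuclideanSpace ℝ (Fin d))
    (hX : ∀ m, ⟪w, X m⟫ ≤ a ∨ a + g ≤ ⟪w, X m⟫) (k : Fin n) :
    applyReluHeads d n
      [⟨AffineMap.const ℝ _ (a+g), innerA w, AffineMap.const ℝ _ v⟩,
       ⟨AffineMap.const ℝ _ a, innerA w, AffineMap.const ℝ _ (-v)⟩] X k
    = X k + (g * ((Finset.univ.filter fun m => ⟪w, X m⟫ ≤ a).card : ℝ)) • v := by
  classical
  simp only [applyReluHeads, List.map_cons, List.map_nil, List.sum_cons, List.sum_nil,
    innerA_apply, AffineMap.const_apply, add_zero]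
  have hcomb : (∑ m, ReLU (a + g - ⟪w, X m⟫) • v) + ∑ m, ReLU (a - ⟪w, X m⟫) • (-v)
      = (∑ m, (ReLU (a + g - ⟪w, X m⟫) - ReLU (a - ⟪w, X m⟫))) • v := by
    rw [Finset.sum_smul]
    rw [← Finset.sum_add_distrib]
    congr 1
    funext m
    rw [sub_smul, smul_neg]
    abel
  rw [hcomb]
  congr 2
  have : ∀ m : Fin n, ReLU (a + g - ⟪w, X m⟫) - ReLU (a - ⟪w, X m⟫)
      = if ⟪w, X m⟫ ≤ a then g else 0 := by
    intro m
    rcases hX m with h | h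
    · rw [if_pos h, ReLU_of_nonneg (by linarith), ReLU_of_nonneg (by linarith)]
      ring
    · rw [if_neg (by linarith), ReLU_of_nonpos (by linarith), ReLU_of_nonpos (by linarith)]
      ring
  rw [Finset.sum_congr rfl (fun m _ => this m), ← Finset.sum_filter, Finset.sum_const,
    nsmul_eq_mul, mul_comm]

lemma escape_effect (d n : ℕ) (v : EuclideanSpace ℝ (Fin d))
    (X : Fin n → EuclideanSpace ℝ (Fin d)) (k : Fin n) :
    applyReluHeads d n
      [⟨AffineMap.const ℝ _ 1, AffineMap.const ℝ _ 0, AffineMap.const ℝ _ v⟩] X k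
    = X k + (n : ℝ) • v := by
  simp only [applyReluHeads, List.map_cons, List.map_nil, List.sum_cons, List.sum_nil,
    AffineMap.const_apply, add_zero, sub_zero]
  rw [ReLU_of_nonneg (by norm_num)]
  rw [one_smul, Finset.sum_const, Finset.card_univ, Fintype.card_fin]
  congr 1
  exact (Nat.cast_smul_eq_nsmul ℝ n v).symm

open Classical in
lemma exists_hat_layer (d n : ℕ) (hn : 0 < n) (A : Finset (EuclideanSpace ℝ (Fin d)))
    (u : EuclideanSpace ℝ (Fin d)) (hu : u ∈ A) (y0 : EuclideanSpace ℝ (Fin d)) :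
    ∃ T : List (ReLUHead d), T.length = 3 ∧
      ∀ X : Fin n → EuclideanSpace ℝ (Fin d), (∀ k, X k ∈ A) →
        ∀ k, applyReluHeads d n T X k = if X k = u then y0 else X k := by
  classical
  obtain ⟨w, hw⟩ := exists_separating
    (((A ×ˢ A).filter fun pr => pr.1 ≠ pr.2).image fun pr => pr.1 - pr.2)
    (by
      intro z hz
      obtain ⟨pr, hpr, rfl⟩ := Finset.mem_image.1 hz
      exact sub_ne_zero.2 (Finset.mem_filter.1 hpr).2)
  have hsep : ∀ z ∈ A, z ≠ u → ⟪w, z⟫ ≠ ⟪w, u⟫ := by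
    intro z hz hzu hc
    have hm : z - u ∈ ((A ×ˢ A).filter fun pr => pr.1 ≠ pr.2).image fun pr => pr.1 - pr.2 :=
      Finset.mem_image.2 ⟨(z, u), Finset.mem_filter.2 ⟨Finset.mem_product.2 ⟨hz, hu⟩, hzu⟩, rfl⟩
    exact hw _ hm (by rw [inner_sub_right, hc, sub_self])
  set c := ⟪w, u⟫ with hc
  set G : Finset ℝ := (A.filter (· ≠ u)).image fun z => |⟪w, z⟫ - c| with hG
  have hGpos : ∀ r ∈ G, 0 < r := by
    intro r hr
    obtain ⟨z, hz, rfl⟩ := Finset.mem_image.1 hr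
    have := Finset.mem_filter.1 hz
    exact abs_pos.2 (sub_ne_zero.2 (hsep z this.1 this.2))
  set δ : ℝ := if hGn : G.Nonempty then G.min' hGn else 1 with hδ
  have hδpos : 0 < δ := by
    rw [hδ]
    split
    · next hGn => exact hGpos _ (G.min'_mem hGn)
    · norm_num
  have hδle : ∀ z ∈ A, z ≠ u → δ ≤ |⟪w, z⟫ - c| := by
    intro z hz hzu
    have hm : |⟪w, z⟫ - c| ∈ G :=
      Finset.mem_image.2 ⟨z, Finset.mem_filter.2 ⟨hz, hzu⟩, rfl⟩
    rw [hδ]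
    split
    · next hGn => exact G.min'_le _ hm
    · next hGn => exact absurd ⟨_, hm⟩ hGn
  set ε : ℝ := δ / 2 with hε
  have hεpos : 0 < ε := by positivity
  have hnε : (n : ℝ) * ε ≠ 0 := by positivity
  set v : EuclideanSpace ℝ (Fin d) := ((n : ℝ) * ε)⁻¹ • (y0 - u) with hv
  set T : List (ReLUHead d) :=
    [⟨innerA w, AffineMap.const ℝ _ (c - ε), AffineMap.const ℝ _ v⟩,
     ⟨innerA w, AffineMap.const ℝ _ c, AffineMap.const ℝ _ ((-2 : ℝ) • v)⟩,
     ⟨innerA w, AffineMap.const ℝ _ (c + ε), AffineMap.const ℝ _ v⟩] with hT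
  refine ⟨T, rfl, ?_⟩
  intro X hX k
  have hsum : applyReluHeads d n T X k
      = X k + ((n : ℝ) * (ReLU (⟪w, X k⟫ - (c - ε)) - 2 * ReLU (⟪w, X k⟫ - c)
          + ReLU (⟪w, X k⟫ - (c + ε)))) • v := by
    simp only [hT, applyReluHeads, List.map_cons, List.map_nil, List.sum_cons, List.sum_nil,
      innerA_apply, AffineMap.const_apply, add_zero, Finset.sum_const, Finset.card_univ,
      Fintype.card_fin]
    rw [← Nat.cast_smul_eq_nsmul ℝ n, ← Nat.cast_smul_eq_nsmul ℝ n, ← Nat.cast_smul_eq_nsmul ℝ n]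
    module
  rw [hsum]
  by_cases hku : X k = u
  · rw [if_pos hku, hku]
    have h1 : ⟪w, u⟫ - (c - ε) = ε := by rw [← hc]; ring
    have h2 : ⟪w, u⟫ - c = 0 := by rw [← hc]; ring
    have h3 : ⟪w, u⟫ - (c + ε) = -ε := by rw [← hc]; ring
    rw [h1, h2, h3, ReLU_of_nonneg hεpos.le, ReLU_of_nonpos le_rfl,
      ReLU_of_nonpos (by linarith), hv, smul_smul]
    have hco : (n : ℝ) * (ε - 2 * 0 + 0) * ((n : ℝ) * ε)⁻¹ = 1 := by
      field_simp
      ring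
    rw [hco, one_smul]
    abel
  · rw [if_neg hku]
    have hk : δ ≤ |⟪w, X k⟫ - c| := hδle _ (hX k) hku
    have hεδ : ε ≤ δ := by rw [hε]; linarith
    rcases le_abs.1 hk with hpos | hneg
    · rw [ReLU_of_nonneg (by linarith), ReLU_of_nonneg (by linarith),
        ReLU_of_nonneg (by linarith)]
      have hco : (n : ℝ) * (⟪w, X k⟫ - (c - ε) - 2 * (⟪w, X k⟫ - c) + (⟪w, X k⟫ - (c + ε))) = 0 := by
        ring
      rw [hco, zero_smul, add_zero]
    · rw [ReLU_of_nonpos (by linarith), ReLU_of_nonpos (by linarith),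
        ReLU_of_nonpos (by linarith)]
      have hco : (n : ℝ) * ((0 : ℝ) - 2 * 0 + 0) = 0 := by ring
      rw [hco, zero_smul, add_zero]

lemma base_sum_eq (B : ℕ) : ∀ (M : ℕ) (f g : ℕ → ℕ), (∀ r, f r < B) → (∀ r, g r < B) →
    (∑ r ∈ Finset.range M, B ^ r * f r) = (∑ r ∈ Finset.range M, B ^ r * g r) →
    ∀ r < M, f r = g r := by
  intro M
  induction M with
  | zero => intro f g _ _ _ r hr; omega
  | succ M ih =>
    intro f g hf hg h r hr
    have hB : 0 < B := lt_of_le_of_lt (Nat.zero_le _) (hf 0)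
    rw [Finset.sum_range_succ', Finset.sum_range_succ'] at h
    have hfac : ∀ F : ℕ → ℕ, (∑ i ∈ Finset.range M, B ^ (i + 1) * F (i + 1))
        = B * ∑ i ∈ Finset.range M, B ^ i * F (i + 1) := by
      intro F
      rw [Finset.mul_sum]
      exact Finset.sum_congr rfl fun i _ => by ring
    rw [hfac f, hfac g, pow_zero, one_mul, one_mul] at h
    have h0 : f 0 = g 0 := by
      have := congrArg (· % B) h
      simpa [Nat.mul_add_mod, Nat.mod_eq_of_lt (hf 0), Nat.mod_eq_of_lt (hg 0)] using this
    have hS : (∑ i ∈ Finset.range M, B ^ i * f (i + 1))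
        = ∑ i ∈ Finset.range M, B ^ i * g (i + 1) := by
      rw [h0] at h
      have := Nat.add_right_cancel h
      exact Nat.eq_of_mul_eq_mul_left hB this
    rcases r with _ | r
    · exact h0
    · exact ih (fun i => f (i + 1)) (fun i => g (i + 1)) (fun i => hf _) (fun i => hg _) hS r
        (by omega)

open Classical in
/-- ReLU attention is transitive on groups of sequences: for `d ≥ 2`, any `p` source
sequences of `n` pairwise distinct tokens in `ℝ^d` whose token sets are pairwise distinct
across sequences can be mapped exactly onto `p` prescribed target sequences by a
composition of at most `2p(n+1) - 1` ReLU attention layers, each with at most `3` heads. -/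
theorem relu_attention_contextually_expressive
    (d p n : ℕ) (hd : 2 ≤ d)
    (x y : Fin p → Fin n → EuclideanSpace ℝ (Fin d))
    (hinj : ∀ i, Function.Injective (x i))
    (hdist : ∀ i j : Fin p, i ≠ j → Set.range (x i) ≠ Set.range (x j)) :
    ∃ layers : List (List (ReLUHead d)),
      layers.length ≤ 2 * p * (n + 1) - 1 ∧
      (∀ T ∈ layers, T.length ≤ 3) ∧
      (∀ i k, applyReluLayers d n layers (x i) k = y i k) := by
  classical
  rcases Nat.eq_zero_or_pos n with hn | hn
  · subst hn
    exact ⟨[], Nat.zero_le _, by simp, fun i k => k.elim0⟩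
  rcases Nat.eq_zero_or_pos p with hp | hp
  · subst hp
    exact ⟨[], Nat.zero_le _, by simp, fun i k => i.elim0⟩
  -- the global token set
  set T : Finset (EuclideanSpace ℝ (Fin d)) :=
    Finset.image (fun ik : Fin p × Fin n => x ik.1 ik.2) Finset.univ with hTdef
  have hxT : ∀ i k, x i k ∈ T := fun i k =>
    Finset.mem_image.2 ⟨(i, k), Finset.mem_univ _, rfl⟩
  -- separating functional
  obtain ⟨w, hw⟩ := exists_separating
    (((T ×ˢ T).filter fun pr => pr.1 ≠ pr.2).image fun pr => pr.1 - pr.2)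
    (by
      intro z hz
      obtain ⟨pr, hpr, rfl⟩ := Finset.mem_image.1 hz
      exact sub_ne_zero.2 (Finset.mem_filter.1 hpr).2)
  have hwsep : ∀ s ∈ T, ∀ t ∈ T, s ≠ t → ⟪w, s⟫ ≠ ⟪w, t⟫ := by
    intro s hs t ht hst hc
    exact hw _ (Finset.mem_image.2 ⟨(s, t),
      Finset.mem_filter.2 ⟨Finset.mem_product.2 ⟨hs, ht⟩, hst⟩, rfl⟩)
      (by rw [inner_sub_right, hc, sub_self])
  -- a nonzero direction orthogonal to w
  obtain ⟨e, he0, hwe⟩ : ∃ e : EuclideanSpace ℝ (Fin d), e ≠ 0 ∧ ⟪w, e⟫ = 0 := by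
    by_cases hw0 : w = 0
    · refine ⟨EuclideanSpace.single ⟨0, by omega⟩ 1, ?_, by rw [hw0, inner_zero_left]⟩
      intro hc
      have := congrArg (fun v : EuclideanSpace ℝ (Fin d) => v ⟨0, by omega⟩) hc
      simp [EuclideanSpace.single] at this
    · have hne : (ℝ ∙ w) ≠ ⊤ := by
        intro hc
        have h1 : Module.finrank ℝ (EuclideanSpace ℝ (Fin d)) = d := finrank_euclideanSpace_fin
        have h2 : Module.finrank ℝ (ℝ ∙ w) = 1 := finrank_span_singleton hw0
        rw [hc] at h2
        rw [finrank_top] at h2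
        omega
      obtain ⟨v, -, hv⟩ := SetLike.exists_of_lt ((lt_top_iff_ne_top (α := Submodule ℝ (EuclideanSpace ℝ (Fin d)))).2 hne)
      refine ⟨v - (⟪w, v⟫ / ⟪w, w⟫) • w, ?_, ?_⟩
      · intro hc
        apply hv
        rw [sub_eq_zero] at hc
        rw [hc]
        exact Submodule.smul_mem _ _ (Submodule.mem_span_singleton_self w)
      · rw [inner_sub_right, real_inner_smul_right]
        rw [div_mul_cancel₀ _ (inner_self_ne_zero.2 hw0)]
        exact sub_self _
  -- thresholds
  set lst : List ℝ := (T.image fun t => ⟪w, t⟫).toList with hlst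
  set M : ℕ := lst.length with hM
  have hMle : M ≤ p * n := by
    rw [hM, hlst, Finset.length_toList]
    calc (T.image fun t => ⟪w, t⟫).card ≤ T.card := Finset.card_image_le
      _ ≤ (Finset.univ : Finset (Fin p × Fin n)).card := by rw [hTdef]; exact Finset.card_image_le
      _ = p * n := by simp
  set th : ℕ → ℝ := fun r => lst.getD r 0 with hth
  have hth_mem : ∀ r < M, th r ∈ T.image fun t => ⟪w, t⟫ := by
    intro r hr
    rw [hth]
    simp only
    rw [List.getD_eq_getElem lst 0 hr]
    rw [← Finset.mem_toList]
    exact List.getElem_mem _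
  have hth_surj : ∀ a ∈ T.image fun t => ⟪w, t⟫, ∃ r < M, th r = a := by
    intro a ha
    rw [← Finset.mem_toList, List.mem_iff_getElem] at ha
    obtain ⟨r, hr, hra⟩ := ha
    exact ⟨r, hr, by rw [hth]; simp only; rw [List.getD_eq_getElem lst 0 hr]; exact hra⟩
  -- gaps
  set gp : ℕ → ℝ := fun r =>
    if hne : (((T.image fun t => ⟪w, t⟫).filter fun b => th r < b)).Nonempty then
      ((((T.image fun t => ⟪w, t⟫).filter fun b => th r < b)).min' hne - th r) / 2
    else 1 with hgp
  have hgp_pos : ∀ r, 0 < gp r := by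
    intro r
    rw [hgp]
    simp only
    split
    · next hne =>
      have := Finset.min'_mem _ hne
      have := (Finset.mem_filter.1 this).2
      linarith
    · norm_num
  have hgap : ∀ r, ∀ b ∈ T.image fun t => ⟪w, t⟫, b ≤ th r ∨ th r + gp r ≤ b := by
    intro r b hb
    by_cases hble : b ≤ th r
    · exact Or.inl hble
    · right
      push_neg at hble
      have hne : (((T.image fun t => ⟪w, t⟫).filter fun b => th r < b)).Nonempty :=
        ⟨b, Finset.mem_filter.2 ⟨hb, hble⟩⟩
      have hmin : ((T.image fun t => ⟪w, t⟫).filter fun b => th r < b).min' hne ≤ b :=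
        Finset.min'_le _ _ (Finset.mem_filter.2 ⟨hb, hble⟩)
      have hminpos : th r < ((T.image fun t => ⟪w, t⟫).filter fun b => th r < b).min' hne :=
        (Finset.mem_filter.1 (Finset.min'_mem _ hne)).2
      rw [hgp]
      simp only
      rw [dif_pos hne]
      linarith
  -- counts
  set N : Fin p → ℕ → ℕ := fun i r =>
    (Finset.univ.filter fun m : Fin n => ⟪w, x i m⟫ ≤ th r).card with hN
  have hNlt : ∀ i r, N i r < n + 1 := by
    intro i r
    rw [hN]
    simp only
    have := Finset.card_filter_le (Finset.univ : Finset (Fin n))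
      (fun m : Fin n => ⟪w, x i m⟫ ≤ th r)
    rw [Finset.card_univ, Fintype.card_fin] at this
    omega
  -- counts determine the sequences
  have hNA : ∀ (i : Fin p) (aa : ℝ), (Finset.univ.filter fun m => ⟪w, x i m⟫ ≤ aa).card
      = ((Finset.image (x i) Finset.univ).filter fun t => ⟪w, t⟫ ≤ aa).card := by
    intro i aa
    rw [Finset.filter_image, Finset.card_image_of_injective _ (hinj i)]
  have key : ∀ A B : Finset (EuclideanSpace ℝ (Fin d)), A ⊆ T → B ⊆ T → ∀ t0, t0 ∈ A → t0 ∉ B →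
      (∀ t ∈ A ∆ B, ⟪w, t0⟫ ≤ ⟪w, t⟫) →
      (A.filter fun t => ⟪w, t⟫ ≤ ⟪w, t0⟫).card
        = (B.filter fun t => ⟪w, t⟫ ≤ ⟪w, t0⟫).card + 1 := by
    intro A B hAT hBT t0 ht0A ht0B hmin
    have hset : (A.filter fun t => ⟪w, t⟫ ≤ ⟪w, t0⟫)
        = insert t0 (B.filter fun t => ⟪w, t⟫ ≤ ⟪w, t0⟫) := by
      ext t
      simp only [Finset.mem_filter, Finset.mem_insert]
      constructor
      · rintro ⟨htA, hle⟩
        by_cases ht0 : t = t0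
        · exact Or.inl ht0
        · right
          by_cases htB : t ∈ B
          · exact ⟨htB, hle⟩
          · exfalso
            have htD : t ∈ A ∆ B := Finset.mem_symmDiff.2 (Or.inl ⟨htA, htB⟩)
            have : ⟪w, t0⟫ ≤ ⟪w, t⟫ := hmin t htD
            exact hwsep t (hAT htA) t0 (hAT ht0A) ht0 (le_antisymm hle this)
      · rintro (rfl | ⟨htB, hle⟩)
        · exact ⟨ht0A, le_rfl⟩
        · refine ⟨?_, hle⟩
          by_contra htA
          have htD : t ∈ A ∆ B := Finset.mem_symmDiff.2 (Or.inr ⟨htB, htA⟩)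
          have : ⟪w, t0⟫ ≤ ⟪w, t⟫ := hmin t htD
          have ht0 : t = t0 := by
            by_contra hne
            exact hwsep t (hBT htB) t0 (hAT ht0A) hne (le_antisymm hle this)
          rw [ht0] at htB
          exact ht0B htB
    rw [hset, Finset.card_insert_of_notMem (by
      intro hc
      exact ht0B (Finset.mem_filter.1 hc).1)]
  -- injectivity of the count signature
  have hsig : ∀ i j : Fin p, i ≠ j → ∃ r < M, N i r ≠ N j r := by
    intro i j hij
    set A := Finset.image (x i) Finset.univ with hA
    set B := Finset.image (x j) Finset.univ with hB
    have hAT : A ⊆ T := by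
      intro t ht
      obtain ⟨m, -, rfl⟩ := Finset.mem_image.1 ht
      exact hxT i m
    have hBT : B ⊆ T := by
      intro t ht
      obtain ⟨m, -, rfl⟩ := Finset.mem_image.1 ht
      exact hxT j m
    have hABne : A ≠ B := by
      intro hc
      apply hdist i j hij
      have hA' : Set.range (x i) = ↑A := by
        rw [hA, Finset.coe_image, Finset.coe_univ, Set.image_univ]
      have hB' : Set.range (x j) = ↑B := by
        rw [hB, Finset.coe_image, Finset.coe_univ, Set.image_univ]
      rw [hA', hB', hc]
    have hD : (A ∆ B).Nonempty := Finset.symmDiff_nonempty.2 hABne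
    have hDW : ((A ∆ B).image fun t => ⟪w, t⟫).Nonempty := hD.image _
    obtain ⟨t0, ht0D, ht0a⟩ := Finset.mem_image.1 (Finset.min'_mem _ hDW)
    have hmin : ∀ t ∈ A ∆ B, ⟪w, t0⟫ ≤ ⟪w, t⟫ := by
      intro t ht
      rw [ht0a]
      exact Finset.min'_le _ _ (Finset.mem_image.2 ⟨t, ht, rfl⟩)
    have ht0T : t0 ∈ T := by
      rcases Finset.mem_symmDiff.1 ht0D with ⟨h1, -⟩ | ⟨h1, -⟩
      · exact hAT h1
      · exact hBT h1
    obtain ⟨r, hrM, hra⟩ := hth_surj ⟪w, t0⟫ (Finset.mem_image.2 ⟨t0, ht0T, rfl⟩)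
    refine ⟨r, hrM, ?_⟩
    have hNi : N i r = (A.filter fun t => ⟪w, t⟫ ≤ ⟪w, t0⟫).card := by
      rw [hN]; simp only; rw [hra, hNA i]
    have hNj : N j r = (B.filter fun t => ⟪w, t⟫ ≤ ⟪w, t0⟫).card := by
      rw [hN]; simp only; rw [hra, hNA j]
    rcases Finset.mem_symmDiff.1 ht0D with ⟨h1, h2⟩ | ⟨h1, h2⟩
    · have := key A B hAT hBT t0 h1 h2 hmin
      omega
    · have := key B A hBT hAT t0 h1 h2 (by rw [symmDiff_comm] at hmin; exact hmin)
      omega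

  -- the signature
  set φ : Fin p → ℕ := fun i => ∑ r ∈ Finset.range M, (n + 1) ^ r * N i r with hφ
  have hφinj : ∀ i j : Fin p, i ≠ j → φ i ≠ φ j := by
    intro i j hij hc
    obtain ⟨r, hrM, hrne⟩ := hsig i j hij
    exact hrne (base_sum_eq (n + 1) M (N i) (N j) (fun r => hNlt i r) (fun r => hNlt j r) hc r hrM)
  -- choose β
  have hfinβ : (({0} : Set ℝ) ∪ ⋃ q : (Fin p × Fin n) × (Fin p × Fin n),
      {b : ℝ | q.1.1 ≠ q.2.1 ∧ x q.1.1 q.1.2 - x q.2.1 q.2.2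
        = (b * ((φ q.2.1 : ℝ) - (φ q.1.1 : ℝ))) • e}).Finite := by
    apply Set.Finite.union (Set.finite_singleton 0)
    apply Set.finite_iUnion
    intro q
    apply Set.Subsingleton.finite
    intro b1 h1 b2 h2
    obtain ⟨hij, hb1⟩ := h1
    obtain ⟨-, hb2⟩ := h2
    have hΔ : ((φ q.2.1 : ℝ) - (φ q.1.1 : ℝ)) ≠ 0 := by
      intro hc
      apply hφinj q.1.1 q.2.1 hij
      have : (φ q.1.1 : ℝ) = (φ q.2.1 : ℝ) := by linarith
      exact_mod_cast this
    have heq : (b1 * ((φ q.2.1 : ℝ) - (φ q.1.1 : ℝ))) • e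
        = (b2 * ((φ q.2.1 : ℝ) - (φ q.1.1 : ℝ))) • e := by rw [← hb1, ← hb2]
    have h0 := sub_eq_zero.2 heq
    rw [← sub_smul, smul_eq_zero] at h0
    rcases h0 with h0 | h0
    · have h1 : (b1 - b2) * ((φ q.2.1 : ℝ) - (φ q.1.1 : ℝ)) = 0 := by linear_combination h0
      rcases mul_eq_zero.1 h1 with h2 | h2
      · exact sub_eq_zero.1 h2
      · exact absurd h2 hΔ
    · exact absurd h0 he0
  obtain ⟨β, hβ⟩ := hfinβ.infinite_compl.nonempty
  simp only [Set.mem_compl_iff, Set.mem_union, Set.mem_singleton_iff, Set.mem_iUnion,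
    Set.mem_setOf_eq, not_or, not_exists] at hβ
  obtain ⟨hβ0, hβsep'⟩ := hβ
  have hβsep : ∀ (i : Fin p) (k : Fin n) (j : Fin p) (l : Fin n), i ≠ j →
      x i k - x j l ≠ (β * ((φ j : ℝ) - (φ i : ℝ))) • e := by
    intro i k j l hij hc
    exact hβsep' ((i, k), (j, l)) ⟨hij, hc⟩
  -- choose R
  have hfinR : (⋃ q : (Fin p × Fin n) × (Fin p × Fin n),
      {r : ℝ | x q.1.1 q.1.2 + (β * (φ q.1.1 : ℝ) + r) • e = y q.2.1 q.2.2}).Finite := by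
    apply Set.finite_iUnion
    intro q
    apply Set.Subsingleton.finite
    intro r1 h1 r2 h2
    have heq : (β * (φ q.1.1 : ℝ) + r1) • e = (β * (φ q.1.1 : ℝ) + r2) • e :=
      add_left_cancel (h1.trans h2.symm)
    have h0 := sub_eq_zero.2 heq
    rw [← sub_smul, smul_eq_zero] at h0
    rcases h0 with h0 | h0
    · have : r1 - r2 = 0 := by linarith [h0]
      linarith
    · exact absurd h0 he0
  obtain ⟨R, hR⟩ := hfinR.infinite_compl.nonempty
  simp only [Set.mem_compl_iff, Set.mem_iUnion, Set.mem_setOf_eq, not_exists] at hR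
  set sh : Fin p → ℝ := fun i => β * (φ i : ℝ) + R with hsh
  set Z1 : Fin p → Fin n → EuclideanSpace ℝ (Fin d) := fun i k => x i k + sh i • e with hZ1
  have P2 : ∀ (i : Fin p) (k : Fin n) (j : Fin p) (l : Fin n), Z1 i k ≠ y j l := by
    intro i k j l hc
    exact hR ((i, k), (j, l)) hc
  have P1 : ∀ (i : Fin p) (k : Fin n) (j : Fin p) (l : Fin n), (i, k) ≠ (j, l) →
      Z1 i k ≠ Z1 j l := by
    intro i k j l hne hc
    simp only [hZ1] at hc
    by_cases hij : i = j
    · subst hij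
      have hk : k ≠ l := fun h => hne (by rw [h])
      apply hk
      apply hinj i
      exact add_right_cancel hc
    · have h' : x i k - x j l = sh j • e - sh i • e := by
        rw [sub_eq_sub_iff_add_eq_add, hc, add_comm]
      rw [← sub_smul] at h'
      have hss : sh j - sh i = β * ((φ j : ℝ) - (φ i : ℝ)) := by simp only [hsh]; ring
      exact hβsep i k j l hij (h'.trans (by rw [hss]))
  -- phase 1 layers
  set vr : ℕ → EuclideanSpace ℝ (Fin d) := fun r => ((β * (n + 1 : ℝ) ^ r) / gp r) • e with hvr
  set cLayer : ℕ → List (ReLUHead d) := fun r =>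
    [⟨AffineMap.const ℝ _ (th r + gp r), innerA w, AffineMap.const ℝ _ (vr r)⟩,
     ⟨AffineMap.const ℝ _ (th r), innerA w, AffineMap.const ℝ _ (-(vr r))⟩] with hcL
  have hwshift : ∀ (i : Fin p) (σ : ℝ) (m : Fin n), ⟪w, x i m + σ • e⟫ = ⟪w, x i m⟫ := by
    intro i σ m
    rw [inner_add_right, real_inner_smul_right, hwe, mul_zero, add_zero]
  have phase1 : ∀ m, m ≤ M → ∀ i, applyReluLayers d n ((List.range m).map cLayer) (x i)
      = fun k => x i k + (β * ∑ r ∈ Finset.range m, (n + 1 : ℝ) ^ r * (N i r : ℝ)) • e := by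
    intro m
    induction m with
    | zero =>
      intro _ i
      funext k
      simp [applyReluLayers]
    | succ m ih =>
      intro hm i
      rw [List.range_succ, List.map_append, applyReluLayers_append, ih (by omega) i]
      funext k
      have heff := count_effect d n w (vr m) (th m) (gp m) (hgp_pos m)
        (fun k => x i k + (β * ∑ r ∈ Finset.range m, (n + 1 : ℝ) ^ r * (N i r : ℝ)) • e)
        (fun mm => by
          rw [hwshift]
          exact hgap m _ (Finset.mem_image.2 ⟨x i mm, hxT i mm, rfl⟩)) k
      simp only [applyReluLayers, List.foldl_cons, List.foldl_nil, List.map_cons, List.map_nil,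
        hcL]
      rw [heff]
      have hcnt : ((Finset.univ.filter fun mm : Fin n =>
          ⟪w, x i mm + (β * ∑ r ∈ Finset.range m, (n + 1 : ℝ) ^ r * (N i r : ℝ)) • e⟫ ≤ th m)).card
          = N i m := by
        rw [hN]
        simp only
        congr 1
        ext mm
        simp only [Finset.mem_filter, Finset.mem_univ, true_and]
        rw [hwshift]
      rw [hcnt, hvr]
      simp only
      rw [smul_smul]
      have hgne : gp m ≠ 0 := (hgp_pos m).ne'
      have hco2 : gp m * (N i m : ℝ) * (β * (n + 1 : ℝ) ^ m / gp m)
          = β * ((n + 1 : ℝ) ^ m * (N i m : ℝ)) := by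
        field_simp
      rw [hco2, Finset.sum_range_succ]
      module
  -- escape layer
  set eLayer : List (ReLUHead d) :=
    [⟨AffineMap.const ℝ _ 1, AffineMap.const ℝ _ 0,
      AffineMap.const ℝ _ ((R / (n : ℝ)) • e)⟩] with heL
  have hnne : (n : ℝ) ≠ 0 := by positivity
  have phase1full : ∀ i, applyReluLayers d n ((List.range M).map cLayer ++ [eLayer]) (x i)
      = fun k => Z1 i k := by
    intro i
    rw [applyReluLayers_append, phase1 M le_rfl i]
    funext k
    simp only [applyReluLayers, List.foldl_cons, List.foldl_nil, heL]
    rw [escape_effect, smul_smul, mul_div_cancel₀ _ hnne]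
    simp only [hZ1, hsh]
    have hφc : ((φ i : ℕ) : ℝ) = ∑ r ∈ Finset.range M, (n + 1 : ℝ) ^ r * (N i r : ℝ) := by
      simp only [hφ]
      push_cast
      ring
    rw [hφc]
    module
  -- phase 2
  have phase2 : ∀ D : Finset (Fin p × Fin n), ∃ Ls : List (List (ReLUHead d)),
      Ls.length = D.card ∧ (∀ Tl ∈ Ls, Tl.length ≤ 3) ∧
      ∀ j, applyReluLayers d n Ls (fun k => Z1 j k)
          = fun k => if (j, k) ∈ D then y j k else Z1 j k := by
    intro D
    induction D using Finset.induction_on with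
    | empty =>
      refine ⟨[], rfl, by simp, fun j => ?_⟩
      funext k
      simp [applyReluLayers]
    | @insert a D ha ih =>
      obtain ⟨a1, a2⟩ := a
      obtain ⟨Ls, hlen, hhd, heff⟩ := ih
      set A : Finset (EuclideanSpace ℝ (Fin d)) :=
        Finset.image (fun jl : Fin p × Fin n => if jl ∈ D then y jl.1 jl.2 else Z1 jl.1 jl.2)
          Finset.univ with hA
      have huA : Z1 a1 a2 ∈ A :=
        Finset.mem_image.2 ⟨(a1, a2), Finset.mem_univ _, by rw [if_neg ha]⟩
      obtain ⟨Th, hTh3, hThe⟩ := exists_hat_layer d n hn A (Z1 a1 a2) huA (y a1 a2)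
      refine ⟨Ls ++ [Th], ?_, ?_, ?_⟩
      · rw [List.length_append, hlen, Finset.card_insert_of_notMem ha, List.length_singleton]
      · intro Tl hTl
        rcases List.mem_append.1 hTl with h | h
        · exact hhd Tl h
        · rw [List.mem_singleton.1 h, hTh3]
      · intro j
        rw [applyReluLayers_append, heff j]
        funext k
        simp only [applyReluLayers, List.foldl_cons, List.foldl_nil]
        rw [hThe _ (fun kk => Finset.mem_image.2 ⟨(j, kk), Finset.mem_univ _, rfl⟩) k]
        by_cases hD : (j, k) ∈ D
        · rw [if_pos hD, if_neg (fun hc => P2 a1 a2 j k hc.symm),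
            if_pos (Finset.mem_insert_of_mem hD)]
        · rw [if_neg hD]
          by_cases h1 : (j, k) = (a1, a2)
          · obtain ⟨hj, hk⟩ := Prod.ext_iff.1 h1
            subst hj
            subst hk
            rw [if_pos rfl, if_pos (Finset.mem_insert_self _ _)]
          · rw [if_neg (P1 j k a1 a2 h1), if_neg (by
              rw [Finset.mem_insert]
              push_neg
              exact ⟨h1, hD⟩)]
  -- final assembly
  obtain ⟨Ls2, hLs2len, hLs2hd, hLs2eff⟩ := phase2 Finset.univ
  refine ⟨(List.range M).map cLayer ++ [eLayer] ++ Ls2, ?_, ?_, ?_⟩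
  · rw [List.length_append, List.length_append, List.length_map, List.length_range,
      List.length_singleton, hLs2len]
    have hcard : (Finset.univ : Finset (Fin p × Fin n)).card = p * n := by simp
    rw [hcard]
    have h2 : 2 * p * (n + 1) = 2 * (p * n) + 2 * p := by ring
    omega
  · intro Tl hTl
    rcases List.mem_append.1 hTl with h | h
    · rcases List.mem_append.1 h with h' | h'
      · obtain ⟨r, -, rfl⟩ := List.mem_map.1 h'
        simp only [hcL]
        norm_num
      · rw [List.mem_singleton.1 h', heL]
        norm_num
    · exact hLs2hd Tl h
  · intro i k
    rw [applyReluLayers_append, phase1full i, hLs2eff i]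
    simp
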